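/- Let $\varphi$ be a smooth strictly plurisubharmonic function on an open subset of $\mathbb{C}^n_t \times \mathbb{C}^d_z$, and let $\omega = \frac{\sqrt{-1}}{2}\sum_\alpha dt_\alpha \wedge d\bar t_\alpha$ be the flat Kähler form on $\mathbb{C}^n$, pulled back via the projection $p$ onto the first factor. If $dd^c\varphi \wedge p^*\omega^{n-1} \geq \varepsilon_0\, p^*\omega^n$ pointwise for some $\varepsilon_0 > 0$, then at every point $\frac{n}{d+1}\cdot \frac{(dd^c\varphi)^{d+1}\wedge p^*\omega^{n-1}}{(dd^c\varphi)^d \wedge p^*\omega^n} \geq n\,\varepsilon_0$, where the quotient denotes the ratio of the two top-degree forms. -/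

import Mathlib

open Complex Matrix
open scoped ComplexOrder

def optEquiv (d : ℕ) : (Unit ⊕ Fin d) ≃ Option (Fin d) :=
  { toFun := Sum.elim (fun _ => none) some
    invFun := fun o => o.elim (Sum.inl ()) Sum.inr
    left_inv := by rintro (⟨⟩|a) <;> rfl
    right_inv := by rintro (_|a) <;> rfl }

theorem stmt5' (n d : ℕ) (ε0 : ℝ)
    (H : Matrix (Fin n ⊕ Fin d) (Fin n ⊕ Fin d) ℂ)
    (hpd : H.PosDef)
    (hyp : ∀ lam : Fin n → Fin d → ℂ,
      (n : ℝ) * ε0 ≤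
        (∑ α, star (Sum.elim (Pi.single α 1) (lam α) : Fin n ⊕ Fin d → ℂ) ⬝ᵥ
          (H *ᵥ (Sum.elim (Pi.single α 1) (lam α)))).re) :
      (n : ℝ) * ε0 ≤
        (∑ α : Fin n,
            (H.submatrix
                (fun o : Option (Fin d) => o.elim (Sum.inl α) Sum.inr)
                (fun o : Option (Fin d) => o.elim (Sum.inl α) Sum.inr)).det /
              (H.submatrix Sum.inr Sum.inr).det).re := by
  classical
  set A : Matrix (Fin d) (Fin d) ℂ := H.submatrix Sum.inr Sum.inr with hAdef
  have hApd : A.PosDef := by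
    rw [Matrix.posDef_iff_dotProduct_mulVec]
    constructor
    · ext a b
      have := congrFun (congrFun hpd.1 (Sum.inr a)) (Sum.inr b)
      simpa [Matrix.conjTranspose_apply, hAdef, Matrix.submatrix_apply] using this
    · intro v hv
      have hu : (Sum.elim 0 v : Fin n ⊕ Fin d → ℂ) ≠ 0 := by
        intro h
        exact hv (funext fun a => congrFun h (Sum.inr a))
      have h2 := hpd.dotProduct_mulVec_pos hu
      convert h2 using 1
      simp [dotProduct, Matrix.mulVec, Fintype.sum_sum_type, hAdef,
        Matrix.submatrix_apply]
  have hAdet : A.det ≠ 0 := hApd.det_pos.ne'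
  haveI : Invertible A := A.invertibleOfIsUnitDet (Ne.isUnit hAdet)
  -- data
  set c : Fin n → Fin d → ℂ := fun α a => H (Sum.inr a) (Sum.inl α) with hcdef
  set r : Fin n → Fin d → ℂ := fun α a => H (Sum.inl α) (Sum.inr a) with hrdef
  set lam : Fin n → Fin d → ℂ := fun α => -(A⁻¹ *ᵥ c α) with hlamdef
  have key : ∀ α : Fin n,
      (H.submatrix
          (fun o : Option (Fin d) => o.elim (Sum.inl α) Sum.inr)
          (fun o : Option (Fin d) => o.elim (Sum.inl α) Sum.inr)).det / A.det
      = H (Sum.inl α) (Sum.inl α) - r α ⬝ᵥ (A⁻¹ *ᵥ c α) := by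
    intro α
    set f : Option (Fin d) → Fin n ⊕ Fin d := fun o => o.elim (Sum.inl α) Sum.inr with hfdef
    set e := optEquiv d with hedef
    have hdet1 : (H.submatrix f f).det = ((H.submatrix f f).submatrix e e).det :=
      (Matrix.det_submatrix_equiv_self e (H.submatrix f f)).symm
    have hblocks : (H.submatrix f f).submatrix e e
        = Matrix.fromBlocks (Matrix.of fun (_ _ : Unit) => H (Sum.inl α) (Sum.inl α))
            (Matrix.of fun (_ : Unit) a => r α a) (Matrix.of fun a (_ : Unit) => c α a) A := by
      ext i j
      rcases i with ⟨⟩|a <;> rcases j with ⟨⟩|b <;> rfl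
    have hschur : ((Matrix.fromBlocks (Matrix.of fun (_ _ : Unit) => H (Sum.inl α) (Sum.inl α))
            (Matrix.of fun (_ : Unit) a => r α a) (Matrix.of fun a (_ : Unit) => c α a) A)).det
        = A.det * (H (Sum.inl α) (Sum.inl α) - r α ⬝ᵥ (A⁻¹ *ᵥ c α)) := by
      rw [Matrix.det_fromBlocks₂₂, Matrix.invOf_eq_nonsing_inv]
      congr 1
      rw [Matrix.det_unique]
      simp only [Matrix.sub_apply, Matrix.mul_apply, Matrix.mulVec, dotProduct]
      congr 1
      simp only [Finset.sum_mul]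
      rw [Finset.sum_comm]
      simp [Finset.mul_sum, mul_assoc]
    rw [hdet1, hblocks, hschur]
    field_simp
  have quad : ∀ α : Fin n,
      star (Sum.elim (Pi.single α 1) (lam α) : Fin n ⊕ Fin d → ℂ) ⬝ᵥ
        (H *ᵥ (Sum.elim (Pi.single α 1) (lam α)))
      = H (Sum.inl α) (Sum.inl α) - r α ⬝ᵥ (A⁻¹ *ᵥ c α) := by
    intro α
    have hH : H = Matrix.fromBlocks H.toBlocks₁₁ H.toBlocks₁₂ H.toBlocks₂₁ H.toBlocks₂₂ :=
      (Matrix.fromBlocks_toBlocks H).symm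
    conv_lhs => rw [hH]
    rw [Matrix.fromBlocks_mulVec]
    simp only [Sum.elim_comp_inl, Sum.elim_comp_inr]
    have hstar : (star (Sum.elim (Pi.single α 1) (lam α) : Fin n ⊕ Fin d → ℂ))
        = Sum.elim (Pi.single α 1) (star (lam α)) := by
      funext k
      rcases k with β | a
      · simp [Pi.single_apply, apply_ite (star : ℂ → ℂ)]
      · rfl
    rw [hstar, sumElim_dotProduct_sumElim]
    have h21 : H.toBlocks₂₁ *ᵥ Pi.single α 1 = c α := by
      funext a
      simp [Matrix.mulVec_single, Matrix.toBlocks₂₁, hcdef]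
    have h22 : H.toBlocks₂₂ *ᵥ lam α = -(c α) := by
      have hA22 : H.toBlocks₂₂ = A := rfl
      rw [hA22, hlamdef]
      simp only [Matrix.mulVec_neg, Matrix.mulVec_mulVec]
      rw [Matrix.mul_nonsing_inv A (Ne.isUnit hAdet), Matrix.one_mulVec]
    rw [h21, h22, add_neg_cancel, dotProduct_zero, add_zero,
      single_dotProduct, one_mul, Pi.add_apply]
    have h11 : (H.toBlocks₁₁ *ᵥ Pi.single α 1) α = H (Sum.inl α) (Sum.inl α) := by
      simp [Matrix.mulVec_single, Matrix.toBlocks₁₁]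
    have h12 : (H.toBlocks₁₂ *ᵥ lam α) α = -(r α ⬝ᵥ (A⁻¹ *ᵥ c α)) := by
      rw [hlamdef]
      simp [Matrix.mulVec, Matrix.toBlocks₁₂, dotProduct, hrdef]
    rw [h11, h12, sub_eq_add_neg]
  refine le_trans (hyp lam) (le_of_eq ?_)
  congr 1
  refine Finset.sum_congr rfl fun α _ => ?_
  rw [quad α, ← key α]


/-- Wirtinger derivative in a (real) direction `v`: `∂_v = (1/2)(D_v - i D_{iv})`. -/
noncomputable def wdDir {E : Type*} [NormedAddCommGroup E] [NormedSpace ℂ E]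
    (v : E) (F : E → ℂ) (x : E) : ℂ :=
  (1 / 2 : ℂ) * (lineDeriv ℝ F x v - Complex.I * lineDeriv ℝ F x (Complex.I • v))

/-- Conjugate Wirtinger derivative in a direction `v`: `∂̄_v = (1/2)(D_v + i D_{iv})`. -/
noncomputable def wdBarDir {E : Type*} [NormedAddCommGroup E] [NormedSpace ℂ E]
    (v : E) (F : E → ℂ) (x : E) : ℂ :=
  (1 / 2 : ℂ) * (lineDeriv ℝ F x v + Complex.I * lineDeriv ℝ F x (Complex.I • v))

/-- Coordinate vectors of `ℂⁿ_t × ℂ^d_z`, indexed by `Fin n ⊕ Fin d`. -/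
noncomputable def coordVec (n d : ℕ) (k : Fin n ⊕ Fin d) : (Fin n → ℂ) × (Fin d → ℂ) :=
  Sum.elim (fun i => (Pi.single i 1, 0)) (fun a => (0, Pi.single a 1)) k

/-- The complex Hessian `(∂²φ/∂w_k ∂w̄_l)` of `φ` at `x`, as an
`(n+d) × (n+d)` complex matrix. -/
noncomputable def cplxHessian (n d : ℕ) (φ : (Fin n → ℂ) × (Fin d → ℂ) → ℝ)
    (x : (Fin n → ℂ) × (Fin d → ℂ)) : Matrix (Fin n ⊕ Fin d) (Fin n ⊕ Fin d) ℂ :=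
  fun k l => wdDir (coordVec n d k) (wdBarDir (coordVec n d l) (fun y => (φ y : ℂ))) x

/-- inequality (sh37).
`φ` smooth and strictly psh on an open subset of `ℂⁿ_t × ℂ^d_z`, `ω` the flat Kähler
form on `ℂⁿ` pulled back by the projection `p` onto the first factor.  The pointwise
inequality `dd^cφ ∧ p^*ω^{n-1} ≥ ε₀ p^*ω^n` is expressed (as positivity of
`(n,n)`-forms, cf. (sh71)–(sh72)) by testing the complex Hessian against the frames
`e_α + λ_α`, `λ_α` a fiber vector.  The conclusion is
`(n/(d+1)) · ((dd^cφ)^{d+1} ∧ p^*ω^{n-1}) / ((dd^cφ)^d ∧ p^*ω^n) ≥ n ε₀`,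
where for the flat base metric the ratio of top-degree forms equals
`∑_α det H|_{z,t_α} / det H|_{z}` (quotients of minors of the complex Hessian). -/
theorem stmt5 (n d : ℕ) (ε0 : ℝ) (hε0 : 0 < ε0)
    (U : Set ((Fin n → ℂ) × (Fin d → ℂ))) (hU : IsOpen U)
    (φ : (Fin n → ℂ) × (Fin d → ℂ) → ℝ) (hφ : ContDiffOn ℝ (⊤ : ℕ∞) φ U)
    (hspsh : ∀ x ∈ U, (cplxHessian n d φ x).PosDef)
    (hyp : ∀ x ∈ U, ∀ lam : Fin n → Fin d → ℂ,
      (n : ℝ) * ε0 ≤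
        (∑ α, star (Sum.elim (Pi.single α 1) (lam α) : Fin n ⊕ Fin d → ℂ) ⬝ᵥ
          (cplxHessian n d φ x *ᵥ (Sum.elim (Pi.single α 1) (lam α)))).re) :
    ∀ x ∈ U,
      (n : ℝ) * ε0 ≤
        (∑ α : Fin n,
            ((cplxHessian n d φ x).submatrix
                (fun o : Option (Fin d) => o.elim (Sum.inl α) Sum.inr)
                (fun o : Option (Fin d) => o.elim (Sum.inl α) Sum.inr)).det /
              ((cplxHessian n d φ x).submatrix Sum.inr Sum.inr).det).re := by
  intro x hx
  exact stmt5' n d ε0 _ (hspsh x hx) (hyp x hx)
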